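/- Let L/K be an isometric extension of non-Archimedean fields, V a finite-dimensional K-vector space, and N a non-Archimedean norm on V. Then the ground field extension N_L, defined on V_L = L ⊗_K V by N_L(w) = inf over all representations w = Σⱼ aⱼ ⊗ vⱼ (aⱼ ∈ L, vⱼ ∈ V) of maxⱼ |aⱼ|·N(vⱼ), is a non-Archimedean norm on the L-vector space V_L (in particular N_L(w) > 0 for every w ≠ 0), and it extends N: N_L(1 ⊗ v) = N(v) for all v ∈ V. -/

import Mathlib

/-!
Over a complete field `K`, a non-Archimedean norm `N` on a finite-dimensional space admits, for
every `α < 1`, an `α`-orthogonal basis `b`, i.e. `N (∑ xᵢ bᵢ) ≥ α ‖xᵢ‖ N (bᵢ)` for all `i`. It is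
built one vector at a time: completeness makes the distance from a new vector `v` to the span of
an orthogonal family positive, so some `w` in that span is a near-best approximation of `v`, and
`v - w` is then almost orthogonal to the span.

In the base-changed basis, the `i`-th coordinate of `w = ∑ aⱼ ⊗ vⱼ` is `wᵢ = ∑ cⱼ aⱼ`, where
`cⱼ` is the `i`-th coordinate of `vⱼ`, and the ultrametric inequality in `L` together with
`α ‖cⱼ‖ N(bᵢ) ≤ N(vⱼ)` bounds `α ‖wᵢ‖ N(bᵢ)` by `maxⱼ ‖aⱼ‖ N(vⱼ)`. This lower bound on `N_L`
gives definiteness, and `N_L (1 ⊗ v) ≥ α N v` for every `α < 1`.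
-/

open scoped BigOperators

/-- A non-Archimedean norm on a `K`-vector space `V`. -/
def IsNAnorm (K : Type*) {V : Type*} [NormedField K] [AddCommGroup V] [Module K V]
    (N : V → ℝ) : Prop :=
  (∀ v, 0 ≤ N v) ∧ (∀ v, N v = 0 ↔ v = 0) ∧
  (∀ (a : K) (v : V), N (a • v) = ‖a‖ * N v) ∧
  (∀ v w : V, N (v + w) ≤ max (N v) (N w))

/-- The sup-distance `d_∞` between two norms on `V`. -/
noncomputable def dInfty {V : Type*} [AddCommGroup V] (N N' : V → ℝ) : ℝ :=
  sSup {r | ∃ v : V, v ≠ 0 ∧ r = |Real.log (N' v) - Real.log (N v)|}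

/-- The `i`-th relative spectral value `λᵢ(N, N')`:
the supremum, over subspaces `W ⊆ V` with `dim W ≥ i`, of
`inf_{w ∈ W ∖ {0}} (log N'(w) − log N(w))`. -/
noncomputable def specVal (K : Type*) {V : Type*} [Field K] [AddCommGroup V] [Module K V]
    (N N' : V → ℝ) (i : ℕ) : ℝ :=
  sSup {r | ∃ W : Submodule K V, i ≤ Module.finrank K W ∧
    r = sInf {s | ∃ w ∈ W, w ≠ (0 : V) ∧ s = Real.log (N' w) - Real.log (N w)}}

/-- The relative volume `vol(N, N') = (1/d)·Σ_{i=1}^d λᵢ(N, N')`, where `d = dim V`. -/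
noncomputable def relVol (K : Type*) (V : Type*) [Field K] [AddCommGroup V] [Module K V]
    (N N' : V → ℝ) : ℝ :=
  (Module.finrank K V : ℝ)⁻¹ *
    ∑ i ∈ Finset.range (Module.finrank K V), specVal K N N' (i + 1)

open scoped TensorProduct

/-- The ground field extension of a norm `N` on `V` to `V_L = L ⊗_K V`:
`N_L(w) = inf` over all representations `w = Σⱼ aⱼ ⊗ vⱼ` of `maxⱼ |aⱼ|·N(vⱼ)`. -/
noncomputable def groundFieldExt (K : Type*) {L V : Type*} [NormedField K] [NormedField L]
    [Algebra K L] [AddCommGroup V] [Module K V] (N : V → ℝ) (w : L ⊗[K] V) : ℝ :=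
  sInf {r | ∃ (n : ℕ) (a : Fin (n + 1) → L) (v : Fin (n + 1) → V),
    w = ∑ j, a j ⊗ₜ[K] v j ∧
    r = Finset.univ.sup' Finset.univ_nonempty fun j => ‖a j‖ * N (v j)}



open Filter Topology Submodule

theorem le_of_forall_lt_one_mul_le_of_pos {a b : ℝ} (h : ∀ α, 0 < α → α < 1 → α * a ≤ b) :
    a ≤ b := by
  have hlim : Tendsto (fun α => α * a) (𝓝 1) (𝓝 (1 * a)) := tendsto_id.mul_const a
  rw [one_mul] at hlim
  refine le_of_tendsto (hlim.mono_left (nhdsWithin_le_nhds (s := Set.Iio 1))) ?_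
  filter_upwards [Ioo_mem_nhdsLT zero_lt_one] with α hα using h α hα.1 hα.2

theorem exists_forall_mul_le_of_forall_pos_le {X : Type*} [Nonempty X] {g : X → ℝ} {δ β : ℝ}
    (hδ : 0 < δ) (hg : ∀ x, δ ≤ g x) (hβ0 : 0 < β) (hβ1 : β < 1) :
    ∃ x₀, ∀ x, β * g x₀ ≤ g x := by
  have hinf : 0 < ⨅ x, g x := hδ.trans_le (le_ciInf hg)
  obtain ⟨x₀, hx₀⟩ := exists_lt_of_ciInf_lt
    ((lt_div_iff₀ hβ0).2 (mul_lt_of_lt_one_right hinf hβ1))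
  exact ⟨x₀, fun x => ((lt_div_iff₀' hβ0).1 hx₀).le.trans
    (ciInf_le ⟨δ, Set.forall_mem_range.2 hg⟩ x)⟩

theorem Submodule.span_insert_sub_eq {R M : Type*} [Ring R] [AddCommGroup M] [Module R M]
    {s : Set M} {w : M} (hw : w ∈ span R s) (v : M) :
    span R (insert (v - w) s) = span R (insert v s) := by
  have key : ∀ a b : M, b - a ∈ span R s → span R (insert a s) ≤ span R (insert b s) := by
    intro a b h
    have ha : b - (b - a) ∈ span R (insert b s) :=
      sub_mem (subset_span (Set.mem_insert b s)) (span_mono (Set.subset_insert b s) h)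
    rw [sub_sub_cancel] at ha
    exact span_le.2 (Set.insert_subset_iff.2 ⟨ha, (Set.subset_insert b s).trans subset_span⟩)
  exact le_antisymm (key _ _ (by simpa using hw)) (key _ _ (by simpa using neg_mem hw))

namespace IsNAnorm

variable {K V : Type*} [NormedField K] [AddCommGroup V] [Module K V] {N : V → ℝ}

theorem nonneg (hN : IsNAnorm K N) (v : V) : 0 ≤ N v := hN.1 v

theorem eq_zero_iff (hN : IsNAnorm K N) (v : V) : N v = 0 ↔ v = 0 := hN.2.1 v

theorem map_smul (hN : IsNAnorm K N) (a : K) (v : V) : N (a • v) = ‖a‖ * N v := hN.2.2.1 a v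

theorem add_le (hN : IsNAnorm K N) (v w : V) : N (v + w) ≤ max (N v) (N w) := hN.2.2.2 v w

theorem pos (hN : IsNAnorm K N) {v : V} (hv : v ≠ 0) : 0 < N v :=
  (hN.nonneg v).lt_of_ne' fun h => hv ((hN.eq_zero_iff v).1 h)

theorem sub_le (hN : IsNAnorm K N) (v w : V) : N (v - w) ≤ max (N v) (N w) := by
  have hneg : N (-w) = N w := by simpa using hN.map_smul (-1) w
  rw [sub_eq_add_neg, ← hneg]
  exact hN.add_le v (-w)

theorem sum_le (hN : IsNAnorm K N) {ι : Type*} (s : Finset ι) {f : ι → V} {C : ℝ} (hC : 0 ≤ C)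
    (h : ∀ i ∈ s, N (f i) ≤ C) : N (∑ i ∈ s, f i) ≤ C :=
  Finset.sum_induction f (fun v => N v ≤ C) (fun v w hv hw => (hN.add_le v w).trans (max_le hv hw))
    (((hN.eq_zero_iff 0).2 rfl).trans_le hC) h

theorem mul_norm_mul_le_add_smul (hN : IsNAnorm K N) {W : Submodule K V} {u : V} {β : ℝ}
    (hu : ∀ w ∈ W, β * N u ≤ N (u + w)) {w : V} (hw : w ∈ W) (c : K) :
    β * (‖c‖ * N u) ≤ N (w + c • u) := by
  rcases eq_or_ne c 0 with rfl | hc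
  · simpa using hN.nonneg w
  have hcu : w + c • u = c • (u + c⁻¹ • w) := by
    rw [smul_add, smul_smul, mul_inv_cancel₀ hc, one_smul, add_comm]
  rw [hcu, hN.map_smul, mul_left_comm]
  exact mul_le_mul_of_nonneg_left (hu _ (W.smul_mem _ hw)) (norm_nonneg c)

theorem mul_le_add_smul (hN : IsNAnorm K N) {W : Submodule K V} {u : V} {β : ℝ}
    (hβ0 : 0 ≤ β) (hβ1 : β ≤ 1) (hu : ∀ w ∈ W, β * N u ≤ N (u + w)) {w : V} (hw : w ∈ W)
    (c : K) : β * N w ≤ N (w + c • u) := by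
  have hsub : N w ≤ max (N (w + c • u)) (N (c • u)) := by
    simpa using hN.sub_le (w + c • u) (c • u)
  calc β * N w ≤ max (β * N (w + c • u)) (β * N (c • u)) := by
        rw [← mul_max_of_nonneg _ _ hβ0]; exact mul_le_mul_of_nonneg_left hsub hβ0
    _ ≤ N (w + c • u) := max_le (mul_le_of_le_one_left (hN.nonneg _) hβ1)
        (by rw [hN.map_smul]; exact hN.mul_norm_mul_le_add_smul hu hw c)

end IsNAnorm

def IsAlmostOrthogonal (K : Type*) {V ι : Type*} [NormedField K] [AddCommGroup V] [Module K V]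
    [Fintype ι] (N : V → ℝ) (α : ℝ) (e : ι → V) : Prop :=
  ∀ (x : ι → K) (i : ι), α * (‖x i‖ * N (e i)) ≤ N (∑ j, x j • e j)

section AlmostOrthogonal

variable {K V : Type*} [NormedField K] [AddCommGroup V] [Module K V] {N : V → ℝ}

theorem IsAlmostOrthogonal.mul_norm_repr_le {ι : Type*} [Fintype ι] {α : ℝ}
    {b : Module.Basis ι K V} (hb : IsAlmostOrthogonal K N α b) (v : V) (i : ι) :
    α * (‖b.repr v i‖ * N (b i)) ≤ N v := by
  simpa only [b.sum_repr] using hb (b.repr v) i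

theorem IsAlmostOrthogonal.mem_span_of_tendsto [CompleteSpace K] {ι : Type*} [Fintype ι]
    (hN : IsNAnorm K N) {α : ℝ} (hα : 0 < α) {e : ι → V} (he : IsAlmostOrthogonal K N α e)
    (he0 : ∀ i, e i ≠ 0) {v : V} {u : ℕ → ι → K}
    (hu : Tendsto (fun k => N (v - ∑ i, u k i • e i)) atTop (𝓝 0)) :
    v ∈ span K (Set.range e) := by
  have hdiff : ∀ k l i, α * (‖u k i - u l i‖ * N (e i)) ≤
      max (N (v - ∑ i, u k i • e i)) (N (v - ∑ i, u l i • e i)) := by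
    intro k l i
    have hkl : ∑ j, (u k j - u l j) • e j =
        (v - ∑ j, u l j • e j) - (v - ∑ j, u k j • e j) := by
      simp only [sub_smul, Finset.sum_sub_distrib]; abel
    calc α * (‖u k i - u l i‖ * N (e i)) ≤ N (∑ j, (u k j - u l j) • e j) :=
          he (fun j => u k j - u l j) i
      _ ≤ max (N (v - ∑ j, u l j • e j)) (N (v - ∑ j, u k j • e j)) := hkl ▸ hN.sub_le _ _
      _ = _ := max_comm _ _
  have hcauchy : ∀ i, CauchySeq fun k => u k i := by
    intro i
    have hc : 0 < α * N (e i) := mul_pos hα (hN.pos (he0 i))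
    refine Metric.cauchySeq_iff.2 fun ε hε => ?_
    obtain ⟨M, hM⟩ := eventually_atTop.1 (hu.eventually (gt_mem_nhds (mul_pos hc hε)))
    refine ⟨M, fun k hk l hl => ?_⟩
    have hlt := (hdiff k l i).trans_lt (max_lt (hM k hk) (hM l hl))
    rw [dist_eq_norm]
    nlinarith
  choose y hy using fun i => cauchySeq_tendsto_of_complete (hcauchy i)
  have hsmall : ∀ ε > 0, N (v - ∑ i, y i • e i) ≤ ε := by
    intro ε hε
    have hcoord : ∀ i, Tendsto (fun k => ‖u k i - y i‖ * N (e i)) atTop (𝓝 0) := fun i => by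
      simpa using ((hy i).sub_const (y i)).norm.mul_const (N (e i))
    obtain ⟨k, hk, hki⟩ := ((hu.eventually (gt_mem_nhds hε)).and
      (eventually_all.2 fun i => (hcoord i).eventually (gt_mem_nhds hε))).exists
    have hsplit : v - ∑ i, y i • e i = (v - ∑ i, u k i • e i) + ∑ i, (u k i - y i) • e i := by
      simp only [sub_smul, Finset.sum_sub_distrib]; abel
    rw [hsplit]
    refine (hN.add_le _ _).trans (max_le hk.le (hN.sum_le _ hε.le fun i _ => ?_))
    rw [hN.map_smul]
    exact (hki i).le
  have hzero : v - ∑ i, y i • e i = 0 := (hN.eq_zero_iff _).1 <|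
    le_antisymm (le_of_forall_pos_le_add (by simpa using hsmall)) (hN.nonneg _)
  rw [sub_eq_zero.1 hzero]
  exact (mem_span_range_iff_exists_fun K).2 ⟨y, rfl⟩

theorem IsAlmostOrthogonal.exists_pos_le_of_notMem_span [CompleteSpace K] {ι : Type*}
    [Fintype ι] (hN : IsNAnorm K N) {α : ℝ} (hα : 0 < α) {e : ι → V}
    (he : IsAlmostOrthogonal K N α e) (he0 : ∀ i, e i ≠ 0) {v : V}
    (hv : v ∉ span K (Set.range e)) :
    ∃ δ > 0, ∀ x : ι → K, δ ≤ N (v - ∑ i, x i • e i) := by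
  by_contra! h
  choose u hu using fun k : ℕ => h (1 / (k + 1)) Nat.one_div_pos_of_nat
  exact hv (he.mem_span_of_tendsto hN hα he0 (squeeze_zero (fun _ => hN.nonneg _)
    (fun k => (hu k).le) tendsto_one_div_add_atTop_nhds_zero_nat))

theorem IsAlmostOrthogonal.snoc (hN : IsNAnorm K N) {β : ℝ} (hβ0 : 0 ≤ β) (hβ1 : β ≤ 1)
    {n : ℕ} {e : Fin n → V} (he : IsAlmostOrthogonal K N β e) {u : V}
    (hu : ∀ w ∈ span K (Set.range e), β * N u ≤ N (u + w)) :
    IsAlmostOrthogonal K N (β * β) (Fin.snoc e u : Fin (n + 1) → V) := by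
  intro x i
  set w := ∑ j : Fin n, x j.castSucc • e j
  have hw : w ∈ span K (Set.range e) := (mem_span_range_iff_exists_fun K).2 ⟨_, rfl⟩
  have hsum : ∑ j, x j • (Fin.snoc e u : Fin (n + 1) → V) j = w + x (Fin.last n) • u := by
    simp [Fin.sum_univ_castSucc, w]
  rw [hsum]
  induction i using Fin.lastCases with
  | last =>
    rw [Fin.snoc_last]
    exact (mul_le_mul_of_nonneg_right (mul_le_of_le_one_left hβ0 hβ1)
      (mul_nonneg (norm_nonneg _) (hN.nonneg u))).trans (hN.mul_norm_mul_le_add_smul hu hw _)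
  | cast j =>
    rw [Fin.snoc_castSucc, mul_assoc]
    exact (mul_le_mul_of_nonneg_left (he (fun j => x j.castSucc) j) hβ0).trans
      (hN.mul_le_add_smul hβ0 hβ1 hu hw _)

theorem IsNAnorm.exists_isAlmostOrthogonal_span_eq [CompleteSpace K] (hN : IsNAnorm K N)
    {n : ℕ} {f : Fin n → V} (hf : LinearIndependent K f) {α : ℝ} (hα0 : 0 < α) (hα1 : α < 1) :
    ∃ e : Fin n → V, span K (Set.range e) = span K (Set.range f) ∧ (∀ i, e i ≠ 0) ∧
      IsAlmostOrthogonal K N α e := by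
  induction n generalizing α with
  | zero => exact ⟨f, rfl, finZeroElim, fun _ i => i.elim0⟩
  | succ n ih =>
    obtain ⟨f, v, rfl⟩ : ∃ f' v, f = Fin.snoc f' v :=
      ⟨Fin.init f, f (Fin.last n), (Fin.snoc_init_self f).symm⟩
    obtain ⟨hf, hv⟩ := linearIndependent_finSnoc.1 hf
    have hβ0 : 0 < √α := Real.sqrt_pos.2 hα0
    have hβ1 : √α < 1 := (Real.sqrt_lt' one_pos).2 (by simpa using hα1)
    obtain ⟨e, hspan, he0, he⟩ := ih hf hβ0 hβ1
    rw [← hspan] at hv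
    obtain ⟨δ, hδ, hdist⟩ := he.exists_pos_le_of_notMem_span hN hβ0 he0 hv
    obtain ⟨x₀, hx₀⟩ := exists_forall_mul_le_of_forall_pos_le hδ hdist hβ0 hβ1
    set w₀ := ∑ i, x₀ i • e i
    have hw₀ : w₀ ∈ span K (Set.range e) := (mem_span_range_iff_exists_fun K).2 ⟨x₀, rfl⟩
    refine ⟨Fin.snoc e (v - w₀), ?_, fun i => ?_, ?_⟩
    · rw [Fin.range_snoc, Fin.range_snoc, span_insert_sub_eq hw₀, span_insert, span_insert,
        hspan]
    · induction i using Fin.lastCases with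
      | last => simpa only [Fin.snoc_last] using sub_ne_zero.2 fun h : v = w₀ => hv (h ▸ hw₀)
      | cast j => simpa only [Fin.snoc_castSucc] using he0 j
    · rw [← Real.mul_self_sqrt hα0.le]
      refine he.snoc hN hβ0.le hβ1.le fun w hw => ?_
      obtain ⟨y, rfl⟩ := (mem_span_range_iff_exists_fun K).1 hw
      have hrw : v - w₀ + ∑ i, y i • e i = v - ∑ i, (x₀ i - y i) • e i := by
        simp only [w₀, sub_smul, Finset.sum_sub_distrib]; abel
      rw [hrw]
      exact hx₀ _

theorem IsNAnorm.exists_basis_isAlmostOrthogonal [CompleteSpace K] [FiniteDimensional K V]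
    (hN : IsNAnorm K N) {α : ℝ} (hα0 : 0 < α) (hα1 : α < 1) :
    ∃ b : Module.Basis (Fin (Module.finrank K V)) K V, IsAlmostOrthogonal K N α b := by
  obtain ⟨e, hspan, -, he⟩ :=
    hN.exists_isAlmostOrthogonal_span_eq (Module.finBasis K V).linearIndependent hα0 hα1
  refine ⟨basisOfTopLeSpanOfCardEqFinrank e (by rw [hspan, Module.Basis.span_eq])
    (Fintype.card_fin _), ?_⟩
  rwa [coe_basisOfTopLeSpanOfCardEqFinrank]

end AlmostOrthogonal

section groundFieldExt

variable {K L V : Type*} [NormedField K] [NormedField L] [Algebra K L] [AddCommGroup V]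
  [Module K V] {N : V → ℝ}

theorem exists_eq_sum_tmul (w : L ⊗[K] V) :
    ∃ (n : ℕ) (a : Fin (n + 1) → L) (v : Fin (n + 1) → V), w = ∑ j, a j ⊗ₜ[K] v j := by
  obtain ⟨n, a, v, rfl⟩ := TensorProduct.exists_sum_tmul_eq w
  exact ⟨n, Fin.cons 0 a, Fin.cons 0 v, by simp [Fin.sum_univ_succ]⟩

theorem le_groundFieldExt {w : L ⊗[K] V} {C : ℝ}
    (h : ∀ (n : ℕ) (a : Fin (n + 1) → L) (v : Fin (n + 1) → V), w = ∑ j, a j ⊗ₜ[K] v j →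
      C ≤ Finset.univ.sup' Finset.univ_nonempty fun j => ‖a j‖ * N (v j)) :
    C ≤ groundFieldExt K N w := by
  obtain ⟨n, a, v, hw⟩ := exists_eq_sum_tmul w
  exact le_csInf ⟨_, n, a, v, hw, rfl⟩ (by rintro r ⟨n, a, v, hw, rfl⟩; exact h n a v hw)

theorem groundFieldExt_le (hN : ∀ v, 0 ≤ N v) {ι : Type*} [Fintype ι] [Nonempty ι]
    {w : L ⊗[K] V} (a : ι → L) (v : ι → V) (hw : w = ∑ j, a j ⊗ₜ[K] v j) {C : ℝ}
    (hC : ∀ j, ‖a j‖ * N (v j) ≤ C) : groundFieldExt K N w ≤ C := by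
  obtain ⟨n, hn⟩ := Nat.exists_eq_succ_of_ne_zero (Fintype.card_ne_zero (α := ι))
  let σ := (Fintype.equivFinOfCardEq hn).symm
  have hbdd : BddBelow {r | ∃ (n : ℕ) (a : Fin (n + 1) → L) (v : Fin (n + 1) → V),
      w = ∑ j, a j ⊗ₜ[K] v j ∧ r = Finset.univ.sup' Finset.univ_nonempty
        fun j => ‖a j‖ * N (v j)} := by
    refine ⟨0, ?_⟩
    rintro r ⟨m, a, v, -, rfl⟩
    exact (mul_nonneg (norm_nonneg _) (hN _)).trans
      (Finset.le_sup' (fun j => ‖a j‖ * N (v j)) (Finset.mem_univ 0))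
  refine (csInf_le hbdd ⟨n, a ∘ σ, v ∘ σ, ?_, rfl⟩).trans
    (Finset.sup'_le _ _ fun j _ => hC (σ j))
  rw [hw]
  exact (σ.sum_comp fun j => a j ⊗ₜ v j).symm

theorem exists_eq_sum_tmul_of_groundFieldExt_lt {w : L ⊗[K] V} {C : ℝ}
    (h : groundFieldExt K N w < C) :
    ∃ (n : ℕ) (a : Fin (n + 1) → L) (v : Fin (n + 1) → V), w = ∑ j, a j ⊗ₜ[K] v j ∧
      (Finset.univ.sup' Finset.univ_nonempty fun j => ‖a j‖ * N (v j)) < C := by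
  by_contra! h'
  exact h.not_ge (le_groundFieldExt h')

theorem groundFieldExt_nonneg (hN : ∀ v, 0 ≤ N v) (w : L ⊗[K] V) :
    0 ≤ groundFieldExt K N w :=
  le_groundFieldExt fun _ a v _ => (mul_nonneg (norm_nonneg _) (hN _)).trans
    (Finset.le_sup' (fun j => ‖a j‖ * N (v j)) (Finset.mem_univ 0))

theorem groundFieldExt_add_le (hN : ∀ v, 0 ≤ N v) (w₁ w₂ : L ⊗[K] V) :
    groundFieldExt K N (w₁ + w₂) ≤ max (groundFieldExt K N w₁) (groundFieldExt K N w₂) := by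
  by_contra! h
  obtain ⟨n, a, v, hw₁, h₁⟩ := exists_eq_sum_tmul_of_groundFieldExt_lt (max_lt_iff.1 h).1
  obtain ⟨m, a', v', hw₂, h₂⟩ := exists_eq_sum_tmul_of_groundFieldExt_lt (max_lt_iff.1 h).2
  refine (groundFieldExt_le hN (Sum.elim a a') (Sum.elim v v') ?_ ?_).not_gt (max_lt h₁ h₂)
  · rw [Fintype.sum_sum_type, hw₁, hw₂]
    rfl
  · rintro (j | j)
    · exact (Finset.le_sup' (fun j => ‖a j‖ * N (v j)) (Finset.mem_univ j)).trans
        (le_max_left _ _)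
    · exact (Finset.le_sup' (fun j => ‖a' j‖ * N (v' j)) (Finset.mem_univ j)).trans
        (le_max_right _ _)

theorem groundFieldExt_smul_le (hN : ∀ v, 0 ≤ N v) (c : L) (w : L ⊗[K] V) :
    groundFieldExt K N (c • w) ≤ ‖c‖ * groundFieldExt K N w := by
  obtain ⟨n₀, a₀, v₀, hw₀⟩ := exists_eq_sum_tmul w
  unfold groundFieldExt
  rw [← smul_eq_mul, ← Real.sInf_smul_of_nonneg (norm_nonneg c)]
  refine le_csInf (Set.Nonempty.smul_set ⟨_, n₀, a₀, v₀, hw₀, rfl⟩) ?_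
  rintro _ ⟨_, ⟨n, a, v, hw, rfl⟩, rfl⟩
  refine groundFieldExt_le hN (fun j => c * a j) v ?_ fun j => ?_
  · simp [hw, Finset.smul_sum, TensorProduct.smul_tmul']
  · rw [norm_mul, mul_assoc]
    exact mul_le_mul_of_nonneg_left
      (Finset.le_sup' (fun j => ‖a j‖ * N (v j)) (Finset.mem_univ j)) (norm_nonneg c)

theorem groundFieldExt_smul (hN : ∀ v, 0 ≤ N v) (c : L) (w : L ⊗[K] V) :
    groundFieldExt K N (c • w) = ‖c‖ * groundFieldExt K N w := by
  refine le_antisymm (groundFieldExt_smul_le hN c w) ?_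
  rcases eq_or_ne c 0 with rfl | hc
  · simpa using groundFieldExt_nonneg hN _
  calc ‖c‖ * groundFieldExt K N w = ‖c‖ * groundFieldExt K N (c⁻¹ • c • w) := by
        rw [inv_smul_smul₀ hc]
    _ ≤ ‖c‖ * (‖c⁻¹‖ * groundFieldExt K N (c • w)) :=
        mul_le_mul_of_nonneg_left (groundFieldExt_smul_le hN _ _) (norm_nonneg c)
    _ = groundFieldExt K N (c • w) := by
        rw [norm_inv, mul_inv_cancel_left₀ (norm_ne_zero_iff.2 hc)]

theorem groundFieldExt_zero (hN : ∀ v, 0 ≤ N v) : groundFieldExt K N (0 : L ⊗[K] V) = 0 := by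
  simpa using groundFieldExt_smul hN (0 : L) (0 : L ⊗[K] V)

theorem IsAlmostOrthogonal.mul_norm_baseChange_repr_le [IsUltrametricDist L]
    (hisom : ∀ x : K, ‖algebraMap K L x‖ = ‖x‖) (hN : ∀ v, 0 ≤ N v) {ι : Type*} [Fintype ι]
    {α : ℝ} (hα : 0 ≤ α) {b : Module.Basis ι K V} (hb : IsAlmostOrthogonal K N α b)
    (w : L ⊗[K] V) (i : ι) :
    α * (‖(b.baseChange L).repr w i‖ * N (b i)) ≤ groundFieldExt K N w := by
  refine le_groundFieldExt fun n a v hw => ?_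
  have hcoord : (b.baseChange L).repr w i = ∑ j, b.repr (v j) i • a j := by
    simp [hw, Module.Basis.baseChange_repr_tmul]
  obtain ⟨j, -, hj⟩ :=
    IsUltrametricDist.exists_norm_finsetSum_le Finset.univ fun j => b.repr (v j) i • a j
  calc α * (‖(b.baseChange L).repr w i‖ * N (b i))
      ≤ α * (‖b.repr (v j) i • a j‖ * N (b i)) := by
        rw [hcoord]; gcongr; exact hN _
    _ = α * (‖b.repr (v j) i‖ * N (b i)) * ‖a j‖ := by
        rw [Algebra.smul_def, norm_mul, hisom]; ring
    _ ≤ N (v j) * ‖a j‖ :=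
        mul_le_mul_of_nonneg_right (hb.mul_norm_repr_le (v j) i) (norm_nonneg _)
    _ ≤ _ := by
        rw [mul_comm]; exact Finset.le_sup' (fun j => ‖a j‖ * N (v j)) (Finset.mem_univ j)

theorem eq_zero_of_groundFieldExt_eq_zero [CompleteSpace K] [FiniteDimensional K V]
    [IsUltrametricDist L] (hisom : ∀ x : K, ‖algebraMap K L x‖ = ‖x‖) (hN : IsNAnorm K N)
    {w : L ⊗[K] V} (hw : groundFieldExt K N w = 0) : w = 0 := by
  obtain ⟨b, hb⟩ := hN.exists_basis_isAlmostOrthogonal one_half_pos one_half_lt_one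
  refine (b.baseChange L).repr.injective (Finsupp.ext fun i => ?_)
  have hle := hb.mul_norm_baseChange_repr_le hisom hN.nonneg one_half_pos.le w i
  have hpos := hN.pos (b.ne_zero i)
  rw [hw] at hle
  rw [map_zero, Finsupp.coe_zero, Pi.zero_apply, ← norm_le_zero_iff]
  nlinarith [norm_nonneg ((b.baseChange L).repr w i)]

theorem groundFieldExt_one_tmul [CompleteSpace K] [FiniteDimensional K V] [IsUltrametricDist L]
    (hisom : ∀ x : K, ‖algebraMap K L x‖ = ‖x‖) (hN : IsNAnorm K N) (v : V) :
    groundFieldExt K N ((1 : L) ⊗ₜ[K] v) = N v := by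
  refine le_antisymm (groundFieldExt_le hN.nonneg (ι := Unit) (fun _ => 1) (fun _ => v)
    (by simp) fun _ => by simp) (le_of_forall_lt_one_mul_le_of_pos fun α hα0 hα1 => ?_)
  obtain ⟨b, hb⟩ := hN.exists_basis_isAlmostOrthogonal hα0 hα1
  rw [← le_div_iff₀' hα0]
  conv_lhs => rw [← b.sum_repr v]
  refine hN.sum_le _ (div_nonneg (groundFieldExt_nonneg hN.nonneg _) hα0.le) fun i _ => ?_
  have hi := hb.mul_norm_baseChange_repr_le hisom hN.nonneg hα0.le ((1 : L) ⊗ₜ[K] v) i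
  rw [Module.Basis.baseChange_repr_tmul, Algebra.smul_def, mul_one, hisom] at hi
  rw [hN.map_smul, le_div_iff₀' hα0]
  exact hi

end groundFieldExt

theorem groundFieldExt_isNAnorm_general
    (K L V : Type*) [NormedField K] [CompleteSpace K]
    [NormedField L] [IsUltrametricDist L] [Algebra K L]
    (hisom : ∀ x : K, ‖algebraMap K L x‖ = ‖x‖)
    [AddCommGroup V] [Module K V] [FiniteDimensional K V]
    (N : V → ℝ) (hN : IsNAnorm K N) :
    IsNAnorm L (groundFieldExt K (L := L) N) ∧
    ∀ v : V, groundFieldExt K (L := L) N ((1 : L) ⊗ₜ[K] v) = N v :=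
  ⟨⟨groundFieldExt_nonneg hN.nonneg,
      fun _ => ⟨eq_zero_of_groundFieldExt_eq_zero hisom hN,
        fun h => h ▸ groundFieldExt_zero hN.nonneg⟩,
      groundFieldExt_smul hN.nonneg, groundFieldExt_add_le hN.nonneg⟩,
    groundFieldExt_one_tmul hisom hN⟩

/-- The ground field extension of a non-Archimedean norm along an isometric extension of
non-Archimedean fields is a non-Archimedean norm on `V_L` extending `N`. -/
theorem groundFieldExt_isNAnorm
    (K L V : Type*) [NormedField K] [IsUltrametricDist K] [CompleteSpace K]
    [NormedField L] [IsUltrametricDist L] [CompleteSpace L] [Algebra K L]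
    (hisom : ∀ x : K, ‖algebraMap K L x‖ = ‖x‖)
    [AddCommGroup V] [Module K V] [FiniteDimensional K V]
    (N : V → ℝ) (hN : IsNAnorm K N) :
    IsNAnorm L (groundFieldExt K (L := L) N) ∧
    ∀ v : V, groundFieldExt K (L := L) N ((1 : L) ⊗ₜ[K] v) = N v :=
  groundFieldExt_isNAnorm_general K L V hisom N hN
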